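/- Assume additionally that m(e) ≥ κ for all e ∈ 𝕍, where 0 < κ ≤ 1. Then the probability vector u_z is uniformly elliptic: for every e ∈ 𝕍, u_z(e) ≥ 2 C_z κ² / (1 + √(1 + 4 C_z)). In particular there exists c_z = c_z(κ) > 0 with u_z(e) ≥ c_z for all e ∈ 𝕍. -/

import Mathlib

open Finset

/-- `unitVecs d` is the set `𝕍 = {e ∈ ℤ^d : |e|₁ = 1}` of signed unit coordinate vectors. -/
noncomputable def unitVecs (d : ℕ) : Finset (Fin d → ℤ) :=
  (Finset.Icc (fun _ => (-1 : ℤ)) (fun _ => 1)).filter (fun e => ∑ i, |e i| = 1)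

/-- The inner product `⟨z, e⟩` of `z ∈ ℝ^d` with `e ∈ ℤ^d`. -/
noncomputable def innZ {d : ℕ} (z : Fin d → ℝ) (e : Fin d → ℤ) : ℝ :=
  ∑ i, z i * (e i : ℝ)

/-
Rationalise: `a + √(a² + b) = b / (√(a² + b) - a)` with `a = ⟨z, e⟩` and `b = 4 C m(e) m(-e)`.
Since `|a| ≤ |z|₁ < 1` and `κ² ≤ m(e) m(-e) ≤ 1`, the numerator is at least `4 C κ²` and the
denominator at most `1 + √(1 + 4 C)`.
-/

lemma neg_mem_unitVecs {d : ℕ} {e : Fin d → ℤ} (h : e ∈ unitVecs d) :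
    -e ∈ unitVecs d := by
  simp only [unitVecs, Finset.mem_filter, Finset.mem_Icc, Pi.le_def] at h ⊢
  obtain ⟨⟨h1, h2⟩, h3⟩ := h
  refine ⟨⟨fun i => ?_, fun i => ?_⟩, ?_⟩
  · have := h2 i; simp only [Pi.neg_apply]; omega
  · have := h1 i; simp only [Pi.neg_apply]; omega
  · simpa using h3

lemma abs_innZ_le {d : ℕ} (z : Fin d → ℝ) {e : Fin d → ℤ} (h : e ∈ unitVecs d) :
    |innZ z e| ≤ ∑ i, |z i| := by
  simp only [unitVecs, Finset.mem_filter, Finset.mem_Icc, Pi.le_def] at h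
  obtain ⟨⟨h1, h2⟩, _⟩ := h
  calc |innZ z e| ≤ ∑ i, |z i * (e i : ℝ)| := Finset.abs_sum_le_sum_abs _ _
    _ ≤ ∑ i, |z i| := by
        refine Finset.sum_le_sum fun i _ => ?_
        have he : |(e i : ℝ)| ≤ 1 := by exact_mod_cast abs_le.mpr ⟨h1 i, h2 i⟩
        rw [abs_mul]
        exact mul_le_of_le_one_right (abs_nonneg _) he

lemma div_one_add_sqrt_le_add_sqrt {a b k B : ℝ} (ha : |a| ≤ 1) (hk0 : 0 ≤ k) (hkb : k ≤ b)
    (hbB : b ≤ B) : k / (1 + √(1 + B)) ≤ a + √(a ^ 2 + b) := by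
  set s := √(a ^ 2 + b)
  have hs2 : s ^ 2 = a ^ 2 + b := Real.sq_sqrt (by nlinarith [sq_nonneg a])
  have has : |a| ≤ s := by
    simpa only [Real.sqrt_sq_eq_abs] using Real.sqrt_le_sqrt (by linarith : a ^ 2 ≤ a ^ 2 + b)
  have hsB : s ≤ √(1 + B) := Real.sqrt_le_sqrt (by nlinarith [sq_abs a, abs_nonneg a])
  have hsum : 0 ≤ a + s := by linarith [neg_abs_le a]
  have hdiff : s - a ≤ 1 + √(1 + B) := by linarith [neg_abs_le a]
  rw [div_le_iff₀ (by positivity)]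
  calc k ≤ (a + s) * (s - a) := by nlinarith
    _ ≤ (a + s) * (1 + √(1 + B)) := mul_le_mul_of_nonneg_left hdiff hsum

theorem stmt6_general (d : ℕ) (z : Fin d → ℝ) (hz : ∑ i, |z i| < 1)
    (m : (Fin d → ℤ) → ℝ) (hm : ∀ e ∈ unitVecs d, 0 < m e ∧ m e ≤ 1)
    (C : ℝ) (hC : 0 < C)
    (u : (Fin d → ℤ) → ℝ)
    (hu : ∀ e ∈ unitVecs d,
      2 * u e = innZ z e + Real.sqrt ((innZ z e)^2 + 4 * C * m e * m (-e)))
    (κ : ℝ) (hκ0 : 0 < κ) (hκm : ∀ e ∈ unitVecs d, κ ≤ m e) :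
    (∀ e ∈ unitVecs d, 2 * C * κ^2 / (1 + Real.sqrt (1 + 4 * C)) ≤ u e) ∧
      ∃ c : ℝ, 0 < c ∧ ∀ e ∈ unitVecs d, c ≤ u e := by
  have bound : ∀ e ∈ unitVecs d, 2 * C * κ^2 / (1 + Real.sqrt (1 + 4 * C)) ≤ u e := by
    intro e he
    have hne := neg_mem_unitVecs he
    have hlower : κ ^ 2 ≤ m e * m (-e) := by
      rw [sq]; exact mul_le_mul (hκm e he) (hκm _ hne) hκ0.le (hm e he).1.le
    have hupper : m e * m (-e) ≤ 1 := mul_le_one₀ (hm e he).2 (hm _ hne).1.le (hm _ hne).2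
    have key := div_one_add_sqrt_le_add_sqrt ((abs_innZ_le z he).trans hz.le)
      (k := 4 * C * κ ^ 2) (b := 4 * C * m e * m (-e)) (B := 4 * C) (by positivity)
      (by rw [mul_assoc _ (m e)]; gcongr)
      (by rw [mul_assoc _ (m e)]; exact mul_le_of_le_one_right (by positivity) hupper)
    rw [← hu e he] at key
    have halve :
        2 * C * κ ^ 2 / (1 + √(1 + 4 * C)) = 4 * C * κ ^ 2 / (1 + √(1 + 4 * C)) / 2 := by ring
    linarith
  exact ⟨bound, _, by positivity, bound⟩

/-- uniform ellipticity of `u_z`: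
`u_z(e) ≥ 2 C_z κ² / (1 + √(1 + 4 C_z))` for all `e ∈ 𝕍`, and in particular
there is `c_z > 0` with `u_z(e) ≥ c_z` on `𝕍`. -/
theorem stmt6 (d : ℕ) (hd : 1 ≤ d) (z : Fin d → ℝ) (hz : ∑ i, |z i| < 1)
    (m : (Fin d → ℤ) → ℝ) (hm : ∀ e ∈ unitVecs d, 0 < m e ∧ m e ≤ 1)
    (hm1 : ∑ e ∈ unitVecs d, m e = 1)
    (C : ℝ) (hC : 0 < C)
    (hfC : (1/2) * ∑ e ∈ unitVecs d,
      Real.sqrt ((innZ z e)^2 + 4 * C * m e * m (-e)) = 1)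
    (u : (Fin d → ℤ) → ℝ)
    (hu : ∀ e ∈ unitVecs d,
      2 * u e = innZ z e + Real.sqrt ((innZ z e)^2 + 4 * C * m e * m (-e)))
    (κ : ℝ) (hκ0 : 0 < κ) (hκ1 : κ ≤ 1) (hκm : ∀ e ∈ unitVecs d, κ ≤ m e) :
    (∀ e ∈ unitVecs d, 2 * C * κ^2 / (1 + Real.sqrt (1 + 4 * C)) ≤ u e) ∧
      ∃ c : ℝ, 0 < c ∧ ∀ e ∈ unitVecs d, c ≤ u e :=
  stmt6_general d z hz m hm C hC u hu κ hκ0 hκm
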